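/- arXiv:1405.7152 — 2 statements merged into one kernel-verified Lean document; each statement's English description precedes it below -/
import Mathlib

section
/- Let g_1, …, g_n ∈ F_{q^m} be linearly independent over F_q, let r_1, …, r_n ∈ F_{q^m}, let f be a q-linearized polynomial over F_{q^m} of q-degree less than k, and let t be the F_q-dimension of the F_q-span of f(g_1) − r_1, …, f(g_n) − r_n. Then there exists a monic q-linearized polynomial D over F_{q^m} of q-degree t such that the q-linearized polynomial N(X) := D(f(X)) is zero or has q-degree at most t + k − 1 and satisfies N(g_i) = D(r_i) for all i = 1, …, n. -/
open Polynomial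

/-- `f` is a `q`-linearized polynomial: every monomial with nonzero coefficient
has exponent a power of `q`, i.e. `f = Σ aᵢ X^(q^i)`. -/
def IsqLinearized (q : ℕ) {L : Type*} [Field L] (f : L[X]) : Prop :=
  ∀ i : ℕ, f.coeff i ≠ 0 → ∃ j : ℕ, i = q ^ j

/-!
Let `V` be the `F_q`-span of the errors `f(gᵢ) - rᵢ`, of dimension `t`. The subspace
polynomial of `V` is a monic `q`-linearized `D` of `q`-degree `t` vanishing on `V`; it is built
one basis vector `a` at a time as `D ↦ D^q - D(a)^(q-1) D`. Since `D` is `F_q`-linear,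
`D(f(gᵢ)) = D(f(gᵢ) - rᵢ) + D(rᵢ) = D(rᵢ)`, and `D ∘ f` is again `q`-linearized of `q`-degree
`t + deg_q f ≤ t + k - 1`.
-/

section

variable {L : Type*} [Field L] {q : ℕ} {f g D : L[X]}

theorem isqLinearized_X (q : ℕ) : IsqLinearized q (X : L[X]) := fun i hi =>
  ⟨0, by simpa [coeff_X, eq_comm] using hi⟩

theorem IsqLinearized.sub (hf : IsqLinearized q f) (hg : IsqLinearized q g) :
    IsqLinearized q (f - g) := by
  intro i hi
  by_cases hfi : f.coeff i = 0
  · exact hg i (by simpa [hfi] using hi)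
  · exact hf i hfi

theorem IsqLinearized.C_mul (hf : IsqLinearized q f) (c : L) : IsqLinearized q (C c * f) :=
  fun i hi => hf i (right_ne_zero_of_mul (by rwa [coeff_C_mul] at hi))

theorem IsqLinearized.eval_mul_of_pow_eq_self (hf : IsqLinearized q f) {c : L} (hc : c ^ q = c)
    (x : L) : f.eval (c * x) = c * f.eval x := by
  have hc_pow : ∀ j, c ^ q ^ j = c := fun j => by
    induction j with
    | zero => simp
    | succ j ih => rw [pow_succ, pow_mul, ih, hc]
  simp only [eval_eq_sum, sum_def, Finset.mul_sum]
  refine Finset.sum_congr rfl fun i hi => ?_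
  obtain ⟨j, rfl⟩ := hf i (mem_support_iff.mp hi)
  rw [mul_pow, hc_pow]
  ring

theorem IsqLinearized.natDegree_comp_le {k t : ℕ} (hq : 1 < q) (hf : IsqLinearized q f)
    (hfd : f.natDegree < q ^ k) (hD : D.natDegree = q ^ t) :
    (D.comp f).natDegree ≤ q ^ (t + k - 1) := by
  rw [natDegree_comp, hD]
  by_cases hf0 : f = 0
  · simp [hf0]
  obtain ⟨j, hj⟩ := hf _ (by rwa [coeff_natDegree, leadingCoeff_ne_zero])
  rw [hj] at hfd ⊢
  have hjk : j < k := (Nat.pow_lt_pow_iff_right hq).mp hfd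
  rw [← pow_add]
  exact Nat.pow_le_pow_right (by omega) (by omega)

variable {p e : ℕ} [ExpChar L p]

theorem IsqLinearized.pow_pow (hf : IsqLinearized (p ^ e) f) (a : ℕ) :
    IsqLinearized (p ^ e) (f ^ (p ^ e) ^ a) := by
  intro i hi
  rw [← pow_mul, ← map_iterateFrobenius_expand p, coeff_map,
    coeff_expand (expChar_pow_pos L p _)] at hi
  split_ifs at hi with hdvd
  · obtain ⟨j, hj⟩ := hf _ fun h => hi (by rw [h, map_zero])
    exact ⟨a + j, by rw [← Nat.mul_div_cancel' hdvd, hj, pow_mul, pow_add]⟩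
  · exact absurd (map_zero _) hi

theorem IsqLinearized.comp (hD : IsqLinearized (p ^ e) D) (hf : IsqLinearized (p ^ e) f) :
    IsqLinearized (p ^ e) (D.comp f) := by
  intro i hi
  rw [comp_eq_sum_left, sum_def, finsetSum_coeff] at hi
  obtain ⟨j, hj, hcoeff⟩ := Finset.exists_ne_zero_of_sum_ne_zero hi
  obtain ⟨a, rfl⟩ := hD j (mem_support_iff.mp hj)
  exact hf.pow_pow a i (right_ne_zero_of_mul (by rwa [coeff_C_mul] at hcoeff))

theorem IsqLinearized.eval_add (hf : IsqLinearized (p ^ e) f) (x y : L) :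
    f.eval (x + y) = f.eval x + f.eval y := by
  simp only [eval_eq_sum, sum_def, ← Finset.sum_add_distrib, ← mul_add]
  refine Finset.sum_congr rfl fun i hi => ?_
  obtain ⟨j, rfl⟩ := hf i (mem_support_iff.mp hi)
  rw [← pow_mul, add_pow_expChar_pow]

theorem IsqLinearized.eval_eq_zero_of_mem_span {F : Type*} [CommSemiring F] [Algebra F L]
    (hF : ∀ c : F, c ^ p ^ e = c) (hD : IsqLinearized (p ^ e) D) {s : Set L}
    (hs : ∀ x ∈ s, D.eval x = 0) {x : L} (hx : x ∈ Submodule.span F s) : D.eval x = 0 := by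
  induction hx using Submodule.span_induction with
  | mem x hx => exact hs x hx
  | zero => simpa using hD.eval_add 0 0
  | add x y _ _ hx hy => rw [hD.eval_add, hx, hy, add_zero]
  | smul c x _ hx =>
    rw [Algebra.smul_def, hD.eval_mul_of_pow_eq_self (by rw [← map_pow, hF]), hx, mul_zero]

theorem exists_monic_isqLinearized_eval_eq_zero (hq : 1 < p ^ e) (l : List L) :
    ∃ D : L[X], D.Monic ∧ IsqLinearized (p ^ e) D ∧ D.natDegree = (p ^ e) ^ l.length ∧
      ∀ a ∈ l, D.eval a = 0 := by
  induction l with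
  | nil => exact ⟨X, monic_X, isqLinearized_X _, by simp, by simp⟩
  | cons a l ih =>
    obtain ⟨D, hmonic, hlin, hdeg, hroots⟩ := ih
    set q := p ^ e
    have hdeg_pow : (D ^ q).natDegree = q ^ (l.length + 1) := by
      rw [hmonic.natDegree_pow, hdeg, ← pow_succ']
    have hlt : (C (D.eval a ^ (q - 1)) * D).natDegree < (D ^ q).natDegree :=
      (natDegree_C_mul_le _ _).trans_lt (by rw [hdeg, hdeg_pow]; exact Nat.pow_lt_pow_succ hq)
    refine ⟨D ^ q - C (D.eval a ^ (q - 1)) * D,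
      (hmonic.pow q).sub_of_left (degree_lt_degree hlt),
      (by simpa using hlin.pow_pow 1 : IsqLinearized q (D ^ q)).sub (hlin.C_mul _), ?_, ?_⟩
    · rw [natDegree_sub_eq_left_of_natDegree_lt hlt, hdeg_pow, List.length_cons]
    · rintro b (_ | ⟨_, hb⟩)
      · simp [← pow_succ, Nat.sub_add_cancel hq.le]
      · simp [hroots b hb, zero_pow (by omega : q ≠ 0)]

end

theorem Module.Basis.span_range_coe {F L ι : Type*} [Field F] [Field L] [Algebra F L]
    {V : Submodule F L} (b : Module.Basis ι F V) :
    Submodule.span F (Set.range fun i => (b i : L)) = V := by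
  rw [Set.range_comp' Subtype.val b, ← V.coe_subtype, Submodule.span_image, b.span_eq,
    Submodule.map_subtype_top]

theorem closest_codeword_gives_interpolating_pair_general
    (q : ℕ) (hq : IsPrimePow q)
    (F L : Type*) [Field F] [Field L] [Fintype F] [Algebra F L]
    (hcardF : Fintype.card F = q)
    (n k : ℕ) (g r : Fin n → L)
    (f : L[X]) (hf : IsqLinearized q f) (hfd : f.natDegree < q ^ k)
    (t : ℕ)
    (ht : Module.finrank F
        (Submodule.span F (Set.range fun i => f.eval (g i) - r i)) = t) :
    ∃ D : L[X], D.Monic ∧ IsqLinearized q D ∧ D.natDegree = q ^ t ∧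
      IsqLinearized q (D.comp f) ∧ (D.comp f).natDegree ≤ q ^ (t + k - 1) ∧
      ∀ i, (D.comp f).eval (g i) = D.eval (r i) := by
  obtain ⟨p, e, hp, he, rfl⟩ := hq
  have hprime : Fact p.Prime := ⟨Nat.prime_iff.mpr hp⟩
  have : CharP F p := charP_of_card_eq_prime_pow hcardF
  have : CharP L p := charP_of_injective_algebraMap' F p
  have hq : 1 < p ^ e := Nat.one_lt_pow he.ne' hprime.out.one_lt
  set V := Submodule.span F (Set.range fun i => f.eval (g i) - r i)
  have : Module.Finite F V := Module.Finite.span_of_finite F (Set.finite_range _)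
  let b := Module.finBasisOfFinrankEq F V ht
  obtain ⟨D, hmonic, hD, hdeg, hroots⟩ :=
    exists_monic_isqLinearized_eval_eq_zero hq (List.ofFn fun i => (b i : L))
  rw [List.length_ofFn] at hdeg
  have hV : ∀ v ∈ V, D.eval v = 0 := fun v hv =>
    hD.eval_eq_zero_of_mem_span (fun c : F => hcardF ▸ FiniteField.pow_card c)
      (by simpa using hroots) (b.span_range_coe.symm ▸ hv)
  refine ⟨D, hmonic, hD, hdeg, hD.comp hf, hf.natDegree_comp_le hq hfd hdeg, fun i => ?_⟩
  rw [eval_comp, ← sub_add_cancel (f.eval (g i)) (r i), hD.eval_add,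
    hV _ (Submodule.subset_span ⟨i, rfl⟩), zero_add]

/-- If the codeword of `f` (of `q`-degree less than `k`) has rank distance `t` to `r`,
then there is a monic `q`-linearized `D` of `q`-degree `t` such that `N := D ∘ f` is
zero or of `q`-degree at most `t + k − 1` and satisfies `N(gᵢ) = D(rᵢ)` for all `i`. -/
theorem closest_codeword_gives_interpolating_pair
    (q m : ℕ) (hq : IsPrimePow q) (hm : 0 < m)
    (F L : Type*) [Field F] [Field L] [Fintype F] [Fintype L] [Algebra F L]
    (hcardF : Fintype.card F = q) (hcardL : Fintype.card L = q ^ m)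
    (n k : ℕ) (hk : 0 < k) (g r : Fin n → L) (hg : LinearIndependent F g)
    (f : L[X]) (hf : IsqLinearized q f) (hfd : f.natDegree < q ^ k)
    (t : ℕ)
    (ht : Module.finrank F
        (Submodule.span F (Set.range fun i => f.eval (g i) - r i)) = t) :
    ∃ D : L[X], D.Monic ∧ IsqLinearized q D ∧ D.natDegree = q ^ t ∧
      IsqLinearized q (D.comp f) ∧ (D.comp f).natDegree ≤ q ^ (t + k - 1) ∧
      ∀ i, (D.comp f).eval (g i) = D.eval (r i) :=
  closest_codeword_gives_interpolating_pair_general q hq F L hcardF n k g r f hf hfd t ht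
end

section
/- Let g_1, …, g_i, r_1, …, r_i ∈ F_{q^m}, and let P, K, N, D be q-linearized polynomials over F_{q^m} satisfying P(g_j) = K(r_j) and N(g_j) = D(r_j) for all j = 1, …, i − 1. Set Δ = N(g_i) − D(r_i) and Γ = P(g_i) − K(r_i), and define P'(X) = P(X)^q − Γ^{q−1} P(X), K'(X) = K(X)^q − Γ^{q−1} K(X), N'(X) = Δ·P(X) − Γ·N(X), D'(X) = Δ·K(X) − Γ·D(X). Then P', K', N', D' are q-linearized and satisfy P'(g_j) = K'(r_j) and N'(g_j) = D'(r_j) for all j = 1, …, i. -/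
/-!
Being the order of `F`, `q` is a power `p ^ e` of the characteristic of `F`, hence of `L`.
So `f ^ q` is `expand q f` with Frobenius-twisted coefficients, and `q`-linearized polynomials
are closed under `f ↦ f ^ q` as well as under linear combinations. For interpolation, if
`δ = P(x) - K(y)` and `ε = N(x) - D(y)` are the defects at a point, then additivity of
`t ↦ t ^ q` makes the new defects `δ ^ q - Γ ^ (q - 1) δ` and `Δ δ - Γ ε`; both vanish when
`δ = ε = 0` (old points) and when `(δ, ε) = (Γ, Δ)` (last point).
-/

open Polynomial

namespace IsqLinearized

variable {q : ℕ} {L : Type*} [Field L] {f h : L[X]}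

lemma sub_s16 (hf : IsqLinearized q f) (hh : IsqLinearized q h) : IsqLinearized q (f - h) := by
  intro i hi
  by_cases hfi : f.coeff i = 0
  · exact hh i fun hhi => hi (by rw [coeff_sub, hfi, hhi, sub_zero])
  · exact hf i hfi

lemma C_mul_s16 (a : L) (hf : IsqLinearized q f) : IsqLinearized q (C a * f) := fun i hi =>
  hf i (right_ne_zero_of_mul (by rwa [coeff_C_mul] at hi))

lemma map {L' : Type*} [Field L'] (φ : L →+* L') (hf : IsqLinearized q f) :
    IsqLinearized q (f.map φ) := fun i hi =>
  hf i fun hfi => hi (by rw [coeff_map, hfi, map_zero])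

lemma expand (hq : 0 < q) (hf : IsqLinearized q f) : IsqLinearized q (expand L q f) := by
  intro i hi
  rw [coeff_expand hq] at hi
  split_ifs at hi with hdvd
  · obtain ⟨c, rfl⟩ := hdvd
    obtain ⟨j, hj⟩ := hf c (by rwa [Nat.mul_div_cancel_left _ hq] at hi)
    exact ⟨j + 1, by rw [hj, pow_succ']⟩
  · exact absurd rfl hi

lemma pow_expChar_pow (p e : ℕ) [ExpChar L p] (hf : IsqLinearized (p ^ e) f) :
    IsqLinearized (p ^ e) (f ^ p ^ e) := by
  rw [← map_iterateFrobenius_expand]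
  exact (hf.expand (expChar_pow_pos L p e)).map _

end IsqLinearized

section Evaluation

variable {R : Type*} [CommRing R]

lemma eval_pow_sub_C_mul_sub_eval (p e : ℕ) [ExpChar R p] (f h : R[X]) (c x y : R) :
    (f ^ p ^ e - C c * f).eval x - (h ^ p ^ e - C c * h).eval y =
      (f.eval x - h.eval y) ^ p ^ e - c * (f.eval x - h.eval y) := by
  simp only [eval_sub, eval_mul, eval_pow, eval_C, sub_pow_expChar_pow]
  ring

lemma eval_C_mul_sub_C_mul_sub_eval (a b : R) (f₁ f₂ h₁ h₂ : R[X]) (x y : R) :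
    (C a * f₁ - C b * f₂).eval x - (C a * h₁ - C b * h₂).eval y =
      a * (f₁.eval x - h₁.eval y) - b * (f₂.eval x - h₂.eval y) := by
  simp only [eval_sub, eval_mul, eval_C]
  ring

end Evaluation

theorem update_step_interpolates_general
    (q : ℕ)
    (F L : Type*) [Field F] [Field L] [Fintype F] [Algebra F L]
    (hcardF : Fintype.card F = q)
    (n : ℕ) (g r : Fin (n + 1) → L)
    (P Kp N D : L[X])
    (hP : IsqLinearized q P) (hKp : IsqLinearized q Kp)
    (hN : IsqLinearized q N) (hD : IsqLinearized q D)
    (hPK : ∀ j : Fin n, P.eval (g j.castSucc) = Kp.eval (r j.castSucc))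
    (hND : ∀ j : Fin n, N.eval (g j.castSucc) = D.eval (r j.castSucc))
    (Δ Γ : L)
    (hΔ : Δ = N.eval (g (Fin.last n)) - D.eval (r (Fin.last n)))
    (hΓ : Γ = P.eval (g (Fin.last n)) - Kp.eval (r (Fin.last n)))
    (P' K' N' D' : L[X])
    (hP' : P' = P ^ q - C (Γ ^ (q - 1)) * P)
    (hK' : K' = Kp ^ q - C (Γ ^ (q - 1)) * Kp)
    (hN' : N' = C Δ * P - C Γ * N)
    (hD' : D' = C Δ * Kp - C Γ * D) :
    (IsqLinearized q P' ∧ IsqLinearized q K' ∧ IsqLinearized q N' ∧ IsqLinearized q D') ∧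
      ∀ j : Fin (n + 1), P'.eval (g j) = K'.eval (r j) ∧ N'.eval (g j) = D'.eval (r j) := by
  obtain ⟨p, _, e, hp, hcard⟩ := FiniteField.card' F
  have : Fact p.Prime := ⟨hp⟩
  have : CharP L p := charP_of_injective_algebraMap (algebraMap F L).injective p
  obtain rfl : q = p ^ (e : ℕ) := hcardF ▸ hcard
  subst hP' hK' hN' hD'
  refine ⟨⟨(hP.pow_expChar_pow p e).sub_s16 (hP.C_mul_s16 _), (hKp.pow_expChar_pow p e).sub_s16 (hKp.C_mul_s16 _),
    (hP.C_mul_s16 _).sub_s16 (hN.C_mul_s16 _), (hKp.C_mul_s16 _).sub_s16 (hD.C_mul_s16 _)⟩, fun j => ?_⟩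
  simp only [← sub_eq_zero (b := eval (r j) _), eval_pow_sub_C_mul_sub_eval,
    eval_C_mul_sub_C_mul_sub_eval]
  induction j using Fin.lastCases with
  | last =>
    rw [← hΓ, ← hΔ, pow_sub_one_mul (expChar_pow_pos L p e).ne']
    constructor <;> ring
  | cast j =>
    rw [hPK j, hND j, sub_self, sub_self, zero_pow (expChar_pow_pos L p e).ne']
    constructor <;> ring

/-- The update step: given `q`-linearized `P, K, N, D` interpolating the first `i − 1`
data points (here the points are indexed by `Fin (n + 1)` with `i = n + 1`), the updated
polynomials `P' = P^q − Γ^{q−1}P`, `K' = K^q − Γ^{q−1}K`, `N' = ΔP − ΓN`,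
`D' = ΔK − ΓD` are `q`-linearized and interpolate all `i` data points. -/
theorem update_step_interpolates
    (q m : ℕ) (hq : IsPrimePow q) (hm : 0 < m)
    (F L : Type*) [Field F] [Field L] [Fintype F] [Fintype L] [Algebra F L]
    (hcardF : Fintype.card F = q) (hcardL : Fintype.card L = q ^ m)
    (n : ℕ) (g r : Fin (n + 1) → L)
    (P Kp N D : L[X])
    (hP : IsqLinearized q P) (hKp : IsqLinearized q Kp)
    (hN : IsqLinearized q N) (hD : IsqLinearized q D)
    (hPK : ∀ j : Fin n, P.eval (g j.castSucc) = Kp.eval (r j.castSucc))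
    (hND : ∀ j : Fin n, N.eval (g j.castSucc) = D.eval (r j.castSucc))
    (Δ Γ : L)
    (hΔ : Δ = N.eval (g (Fin.last n)) - D.eval (r (Fin.last n)))
    (hΓ : Γ = P.eval (g (Fin.last n)) - Kp.eval (r (Fin.last n)))
    (P' K' N' D' : L[X])
    (hP' : P' = P ^ q - C (Γ ^ (q - 1)) * P)
    (hK' : K' = Kp ^ q - C (Γ ^ (q - 1)) * Kp)
    (hN' : N' = C Δ * P - C Γ * N)
    (hD' : D' = C Δ * Kp - C Γ * D) :
    (IsqLinearized q P' ∧ IsqLinearized q K' ∧ IsqLinearized q N' ∧ IsqLinearized q D') ∧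
      ∀ j : Fin (n + 1), P'.eval (g j) = K'.eval (r j) ∧ N'.eval (g j) = D'.eval (r j) :=
  update_step_interpolates_general q F L hcardF n g r P Kp N D hP hKp hN hD hPK hND Δ Γ hΔ hΓ P' K'
    N' D' hP' hK' hN' hD'
end
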